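/- Let {λ_n} be a nondecreasing sequence of nonnegative reals with Σ_n e^{−λ_n t} < ∞ for every t > 0, let μ be the counting measure μ(X) = #{n : λ_n ∈ X} on [0,∞), and let N(λ) = μ([0,λ]). If the Laplace transform satisfies μ̂(t) = Σ_n e^{−λ_n t} ∼ A t^{−γ} as t → 0⁺ for constants A > 0, γ > 0, then N(λ) ∼ (A/Γ(γ+1)) λ^γ as λ → ∞. -/

import Mathlib

open Filter
noncomputable section

/-!
Karamata's argument. The hypothesis, rescaled, gives
`t^γ Σ_n e^{-kλ_n t} → A k^{-γ} = (A / Γ(γ)) ∫_0^∞ u^{γ-1} e^{-ku} du` for each `k ≥ 1`, so by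
linearity `t^γ Σ_n q(e^{-λ_n t}) → (A / Γ(γ)) ∫_0^∞ u^{γ-1} q(e^{-u}) du` for every polynomial `q`
with `q(0) = 0`. For `χ = 1_{[e^{-1}, 1]}` one has `Σ_n χ(e^{-λ_n t}) = N(1/t)` and
`∫_0^∞ u^{γ-1} χ(e^{-u}) du = 1/γ`. Weierstrass approximation of continuous ramps squeezes `χ`
on `[0, 1]` between such polynomials with integrals arbitrarily close to `1/γ`, and since all
`e^{-λ_n t}` lie in `[0, 1]` the limit passes to `χ`: `t^γ N(1/t) → A / (γ Γ(γ)) = A / Γ(γ + 1)`.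
-/

open Set MeasureTheory Real Topology Polynomial

namespace Karamata

def laplaceSum (lam : ℕ → ℝ) (g : ℝ → ℝ) (t : ℝ) : ℝ := ∑' n, g (exp (-lam n * t))

def GammaIntegrable (γ : ℝ) (g : ℝ → ℝ) : Prop :=
  IntegrableOn (fun u => u ^ (γ - 1) * g (exp (-u))) (Ioi 0)

def gammaIntegral (γ : ℝ) (g : ℝ → ℝ) : ℝ := ∫ u in Ioi 0, u ^ (γ - 1) * g (exp (-u))

def admissible (lam : ℕ → ℝ) (A γ : ℝ) : Submodule ℝ (ℝ → ℝ) where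
  carrier := {g | (∀ t > 0, Summable fun n => g (exp (-lam n * t))) ∧ GammaIntegrable γ g ∧
    Tendsto (fun t => laplaceSum lam g t * t ^ γ) (𝓝[>] 0)
      (𝓝 (A / Gamma γ * gammaIntegral γ g))}
  zero_mem' := by simp [laplaceSum, GammaIntegrable, gammaIntegral, summable_zero]
  add_mem' := by
    rintro g₁ g₂ ⟨hs₁, hi₁, hl₁⟩ ⟨hs₂, hi₂, hl₂⟩
    refine ⟨fun t ht => (hs₁ t ht).add (hs₂ t ht), ?_, ?_⟩
    · exact (hi₁.add hi₂).congr_fun (fun u _ => (mul_add ..).symm) measurableSet_Ioi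
    have hint : gammaIntegral γ (g₁ + g₂) = gammaIntegral γ g₁ + gammaIntegral γ g₂ := by
      simp only [gammaIntegral, Pi.add_apply, mul_add]
      exact integral_add hi₁ hi₂
    rw [hint, mul_add]
    refine (hl₁.add hl₂).congr' ?_
    filter_upwards [self_mem_nhdsWithin] with t (ht : 0 < t)
    simp only [laplaceSum, Pi.add_apply, (hs₁ t ht).tsum_add (hs₂ t ht), add_mul]
  smul_mem' := by
    rintro c g ⟨hs, hi, hl⟩
    refine ⟨fun t ht => (hs t ht).mul_left c, ?_, ?_⟩
    · exact IntegrableOn.congr_fun (hi.const_mul c) (fun u _ => mul_left_comm ..) measurableSet_Ioi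
    have hint : gammaIntegral γ (c • g) = c * gammaIntegral γ g := by
      simp only [gammaIntegral, Pi.smul_apply, smul_eq_mul, mul_left_comm _ c]
      exact integral_const_mul c _
    rw [hint, mul_left_comm]
    refine (hl.const_mul c).congr fun t => ?_
    simp only [laplaceSum, Pi.smul_apply, smul_eq_mul, tsum_mul_left, mul_assoc]

theorem tendsto_comp_const_mul_mul_rpow {F : ℝ → ℝ} {A γ c : ℝ} (hc : 0 < c)
    (hF : Tendsto (fun t => F t * t ^ γ) (𝓝[>] 0) (𝓝 A)) :
    Tendsto (fun t => F (c * t) * t ^ γ) (𝓝[>] 0) (𝓝 (A * c ^ (-γ))) := by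
  have hmul : Tendsto (c * ·) (𝓝[>] (0 : ℝ)) (𝓝[>] 0) :=
    tendsto_iff_comap.2 (comap_mulLeft_nhdsGT_zero hc).ge
  refine ((hF.comp hmul).mul_const (c ^ (-γ))).congr' ?_
  filter_upwards [self_mem_nhdsWithin] with t (ht : 0 < t)
  rw [Function.comp_apply, mul_rpow hc.le ht.le, rpow_neg hc.le]
  field_simp [(rpow_pos_of_pos hc γ).ne']

theorem integrableOn_rpow_mul_exp_neg_mul {γ r : ℝ} (hγ : 0 < γ) (hr : 0 < r) :
    IntegrableOn (fun u : ℝ => u ^ (γ - 1) * exp (-(r * u))) (Ioi 0) := by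
  simpa using integrableOn_rpow_mul_exp_neg_mul_rpow (p := 1) (s := γ - 1) (by linarith) one_pos hr

theorem exp_neg_mem_Icc {x : ℝ} (hx : 0 ≤ x) : exp (-x) ∈ Icc (0 : ℝ) 1 :=
  ⟨(exp_pos _).le, exp_le_one_iff.2 (neg_nonpos.2 hx)⟩

section

variable {lam : ℕ → ℝ} {A γ : ℝ}

theorem pow_mem_admissible (hγ : 0 < γ)
    (hsum : ∀ t > (0 : ℝ), Summable fun n => exp (-lam n * t))
    (hasymp : Tendsto (fun t : ℝ => (∑' n, exp (-lam n * t)) * t ^ γ) (𝓝[>] 0) (𝓝 A))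
    {k : ℕ} (hk : 0 < k) : (fun y : ℝ => y ^ k) ∈ admissible lam A γ := by
  have hk' : (0 : ℝ) < k := Nat.cast_pos.2 hk
  have hpow : ∀ x y : ℝ, exp (-x * y) ^ k = exp (-x * (k * y)) := fun x y => by
    rw [← exp_nat_mul]
    ring_nf
  have hexp : ∀ u : ℝ, exp (-u) ^ k = exp (-(k * u)) := fun u => by
    rw [← exp_nat_mul, mul_neg]
  refine ⟨fun t ht => ?_, ?_, ?_⟩
  · simpa only [hpow] using hsum (k * t) (mul_pos hk' ht)
  · simpa only [GammaIntegrable, hexp] using integrableOn_rpow_mul_exp_neg_mul hγ hk'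
  · have hint : gammaIntegral γ (fun y => y ^ k) = k ^ (-γ) * Gamma γ := by
      simp only [gammaIntegral, hexp]
      rw [integral_rpow_mul_exp_neg_mul_Ioi hγ hk', one_div, inv_rpow hk'.le, rpow_neg hk'.le]
    have hlim : A / Gamma γ * (k ^ (-γ) * Gamma γ) = A * k ^ (-γ) := by
      field_simp [(Gamma_pos_of_pos hγ).ne']
    rw [hint, hlim]
    simpa only [laplaceSum, hpow] using
      tendsto_comp_const_mul_mul_rpow (F := fun t => ∑' n, exp (-lam n * t)) hk' hasymp

theorem polynomial_eval_mem_admissible (hγ : 0 < γ)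
    (hsum : ∀ t > (0 : ℝ), Summable fun n => exp (-lam n * t))
    (hasymp : Tendsto (fun t : ℝ => (∑' n, exp (-lam n * t)) * t ^ γ) (𝓝[>] 0) (𝓝 A))
    {q : ℝ[X]} (hq : q.coeff 0 = 0) : (fun y => q.eval y) ∈ admissible lam A γ := by
  have hsupp : (fun y => q.eval y) = ∑ k ∈ q.support, q.coeff k • fun y : ℝ => y ^ k := by
    ext y
    simp [eval_eq_sum, Polynomial.sum_def, Finset.sum_apply]
  rw [hsupp]
  refine Submodule.sum_mem _ fun k hk => Submodule.smul_mem _ _ ?_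
  refine pow_mem_admissible hγ hsum hasymp (Nat.pos_of_ne_zero ?_)
  rintro rfl
  exact mem_support_iff.1 hk hq

theorem tendsto_of_admissible_sandwich (hA : 0 < A) (hγ : 0 < γ) (hpos : ∀ n, 0 ≤ lam n)
    {χ : ℝ → ℝ} {J : ℝ} (hχ : ∀ t > 0, Summable fun n => χ (exp (-lam n * t)))
    (hup : ∀ J' > J, ∃ g ∈ admissible lam A γ,
      (∀ y ∈ Icc (0 : ℝ) 1, χ y ≤ g y) ∧ gammaIntegral γ g < J')
    (hlow : ∀ J' < J, ∃ g ∈ admissible lam A γ,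
      (∀ y ∈ Icc (0 : ℝ) 1, g y ≤ χ y) ∧ J' < gammaIntegral γ g) :
    Tendsto (fun t => laplaceSum lam χ t * t ^ γ) (𝓝[>] 0) (𝓝 (A / Gamma γ * J)) := by
  have hc : 0 < A / Gamma γ := div_pos hA (Gamma_pos_of_pos hγ)
  have hy : ∀ t > 0, ∀ n, exp (-lam n * t) ∈ Icc (0 : ℝ) 1 := fun t ht n => by
    simpa only [neg_mul] using exp_neg_mem_Icc (mul_nonneg (hpos n) ht.le)
  refine tendsto_order.2 ⟨fun L hL => ?_, fun L hL => ?_⟩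
  · obtain ⟨g, ⟨hgs, -, hg⟩, hgχ, hgJ⟩ := hlow (L / (A / Gamma γ)) ((div_lt_iff₀' hc).2 hL)
    filter_upwards [hg.eventually_const_lt ((div_lt_iff₀' hc).1 hgJ), self_mem_nhdsWithin]
      with t hLt (ht : 0 < t)
    refine hLt.trans_le (mul_le_mul_of_nonneg_right ?_ (rpow_nonneg ht.le _))
    exact (hgs t ht).tsum_le_tsum (fun n => hgχ _ (hy t ht n)) (hχ t ht)
  · obtain ⟨g, ⟨hgs, -, hg⟩, hχg, hgJ⟩ := hup (L / (A / Gamma γ)) ((lt_div_iff₀' hc).2 hL)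
    filter_upwards [hg.eventually_lt_const ((lt_div_iff₀' hc).1 hgJ), self_mem_nhdsWithin]
      with t hLt (ht : 0 < t)
    refine lt_of_le_of_lt (mul_le_mul_of_nonneg_right ?_ (rpow_nonneg ht.le _)) hLt
    exact (hχ t ht).tsum_le_tsum (fun n => hχg _ (hy t ht n)) (hgs t ht)

end

/-- The error is weighted by `y` so that, summed over `y = e^{-λ_n t}`, it stays comparable to
`Σ_n e^{-λ_n t} ~ A t^{-γ}`. -/
theorem exists_polynomial_abs_sub_le_mul {g : ℝ → ℝ} (hg : ContinuousOn g (Icc 0 1)) {a : ℝ}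
    (ha : 0 < a) (hga : ∀ y ∈ Icc 0 a, g y = 0) {ε : ℝ} (hε : 0 < ε) :
    ∃ q : ℝ[X], q.coeff 0 = 0 ∧ ∀ y ∈ Icc (0 : ℝ) 1, |q.eval y - g y| ≤ ε * y := by
  have hmax : ∀ y, max y a ≠ 0 := fun y => (ha.trans_le (le_max_right y a)).ne'
  obtain ⟨p, hp⟩ := exists_polynomial_near_of_continuousOn 0 1 (fun y => g y / max y a)
    (hg.div (continuous_id.max continuous_const).continuousOn fun y _ => hmax y) ε hε
  refine ⟨X * p, by simp, fun y hy => ?_⟩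
  have hdiv : y * (g y / max y a) = g y := by
    rcases le_or_gt y a with h | h
    · simp [hga y ⟨hy.1, h⟩]
    · rw [max_eq_left h.le, mul_div_cancel₀ _ (ha.trans h).ne']
  rw [eval_mul, eval_X, ← hdiv, ← mul_sub, abs_mul, abs_of_nonneg hy.1, mul_comm ε]
  exact mul_le_mul_of_nonneg_left (hp y hy).le hy.1

theorem exists_polynomial_sandwich_indicator {a b : ℝ} (ha : 0 < a) (hab : a < b) {ε : ℝ}
    (hε : 0 < ε) :
    ∃ q : ℝ[X], q.coeff 0 = 0 ∧ ∀ y ∈ Icc (0 : ℝ) 1,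
      (Ici b).indicator 1 y - ε * y ≤ q.eval y ∧ q.eval y ≤ (Ici a).indicator 1 y + ε * y := by
  obtain ⟨g, hga, hgb, hg01⟩ := exists_continuous_zero_one_of_isClosed isClosed_Iic isClosed_Ici
    (Iic_disjoint_Ici.2 hab.not_ge)
  obtain ⟨q, hq0, hq⟩ := exists_polynomial_abs_sub_le_mul g.continuous.continuousOn ha
    (fun y hy => hga hy.2) hε
  refine ⟨q, hq0, fun y hy => ?_⟩
  have hbg : (Ici b).indicator 1 y ≤ g y := by
    by_cases h : y ∈ Ici b
    · simp [indicator_of_mem h, hgb h]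
    · simpa [indicator_of_notMem h] using (hg01 y).1
  have hga' : g y ≤ (Ici a).indicator 1 y := by
    by_cases h : y ∈ Ici a
    · simpa [indicator_of_mem h] using (hg01 y).2
    · simp [indicator_of_notMem h, hga (not_le.1 (show ¬a ≤ y from h)).le]
  have := abs_le.1 (hq y hy)
  constructor <;> linarith

theorem indicator_Ici_le_inv_mul {b y : ℝ} (hb : 0 < b) (hy : 0 ≤ y) :
    (Ici b).indicator (1 : ℝ → ℝ) y ≤ b⁻¹ * y := by
  by_cases h : y ∈ Ici b
  · simpa [indicator_of_mem h, le_inv_mul_iff₀ hb] using h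
  · simpa [indicator_of_notMem h] using mul_nonneg (inv_nonneg.2 hb.le) hy

theorem gammaIntegral_mono {γ : ℝ} {g₁ g₂ : ℝ → ℝ}
    (h₁ : GammaIntegrable γ g₁) (h₂ : GammaIntegrable γ g₂)
    (h : ∀ y ∈ Icc (0 : ℝ) 1, g₁ y ≤ g₂ y) : gammaIntegral γ g₁ ≤ gammaIntegral γ g₂ :=
  setIntegral_mono_on h₁ h₂ measurableSet_Ioi fun _ hu =>
    mul_le_mul_of_nonneg_left (h _ (exp_neg_mem_Icc hu.le)) (rpow_nonneg hu.le _)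

theorem gammaIntegral_indicator_add {γ s : ℝ} (hγ : 0 < γ) (hs : 0 < s) (c : ℝ) :
    GammaIntegrable γ (fun y => (Ici (exp (-s))).indicator 1 y + c * y) ∧
    gammaIntegral γ (fun y => (Ici (exp (-s))).indicator 1 y + c * y) =
      s ^ γ / γ + c * Gamma γ := by
  have hpt : EqOn (fun u => u ^ (γ - 1) * ((Ici (exp (-s))).indicator 1 (exp (-u)) + c * exp (-u)))
      (fun u => (Iic s).indicator (fun u => u ^ (γ - 1)) u + c * (u ^ (γ - 1) * exp (-(1 * u))))
      (Ioi 0) := fun _ _ => by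
    simp only [indicator_apply, mem_Ici, mem_Iic, exp_le_exp, neg_le_neg_iff, Pi.one_apply, one_mul]
    split_ifs <;> ring
  have hind : IntegrableOn ((Iic s).indicator fun u => u ^ (γ - 1)) (Ioi 0) := by
    rw [integrableOn_indicator_iff measurableSet_Iic, Iic_inter_Ioi,
      ← intervalIntegrable_iff_integrableOn_Ioc_of_le hs.le]
    exact intervalIntegral.intervalIntegrable_rpow' (by linarith)
  have hexp := (integrableOn_rpow_mul_exp_neg_mul hγ one_pos).const_mul c
  refine ⟨(hind.add hexp).congr_fun hpt.symm measurableSet_Ioi, ?_⟩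
  rw [gammaIntegral, setIntegral_congr_fun measurableSet_Ioi hpt, integral_add hind hexp,
    integral_const_mul, integral_rpow_mul_exp_neg_mul_Ioi hγ one_pos,
    setIntegral_indicator measurableSet_Iic, Ioi_inter_Iic, ← intervalIntegral.integral_of_le hs.le,
    integral_rpow (Or.inl (by linarith))]
  simp [zero_rpow hγ.ne']

section

variable {lam : ℕ → ℝ} {A γ : ℝ}

theorem exists_admissible_ge_indicator (hγ : 0 < γ)
    (hsum : ∀ t > (0 : ℝ), Summable fun n => exp (-lam n * t))
    (hasymp : Tendsto (fun t : ℝ => (∑' n, exp (-lam n * t)) * t ^ γ) (𝓝[>] 0) (𝓝 A))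
    {J : ℝ} (hJ : 1 / γ < J) :
    ∃ g ∈ admissible lam A γ, (∀ y ∈ Icc (0 : ℝ) 1, (Ici (exp (-1))).indicator 1 y ≤ g y) ∧
      gammaIntegral γ g < J := by
  have hcont : Tendsto (fun s : ℝ => s ^ γ / γ) (𝓝[>] 1) (𝓝 (1 / γ)) := by
    simpa using (((continuous_id.rpow_const fun _ => Or.inr hγ.le).div_const γ).tendsto 1).mono_left
      nhdsWithin_le_nhds
  obtain ⟨s, hsJ, hs1 : 1 < s⟩ :=
    ((hcont.eventually_lt_const (by linarith : 1 / γ < (1 / γ + J) / 2)).and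
      self_mem_nhdsWithin).exists
  set ε := (J - 1 / γ) / (4 * Gamma γ)
  obtain ⟨q, hq0, hq⟩ := exists_polynomial_sandwich_indicator (exp_pos (-s))
    (exp_lt_exp.2 (neg_lt_neg hs1)) (ε := ε) (div_pos (sub_pos.2 hJ) (by positivity))
  have hmem := polynomial_eval_mem_admissible hγ hsum hasymp (q := q + C ε * X) (by simp [hq0])
  obtain ⟨hint, hval⟩ := gammaIntegral_indicator_add hγ (by linarith : 0 < s) (2 * ε)
  refine ⟨_, hmem, fun y hy => ?_, ?_⟩
  · simp only [eval_add, eval_mul, eval_C, eval_X]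
    linarith [(hq y hy).1]
  refine (gammaIntegral_mono hmem.2.1 hint fun y hy => ?_).trans_lt ?_
  · simp only [eval_add, eval_mul, eval_C, eval_X]
    linarith [(hq y hy).2]
  · have : 2 * ε * Gamma γ = (J - 1 / γ) / 2 := by unfold ε; field_simp; ring
    rw [hval]
    linarith

theorem exists_admissible_le_indicator (hγ : 0 < γ)
    (hsum : ∀ t > (0 : ℝ), Summable fun n => exp (-lam n * t))
    (hasymp : Tendsto (fun t : ℝ => (∑' n, exp (-lam n * t)) * t ^ γ) (𝓝[>] 0) (𝓝 A))
    {J : ℝ} (hJ : J < 1 / γ) :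
    ∃ g ∈ admissible lam A γ, (∀ y ∈ Icc (0 : ℝ) 1, g y ≤ (Ici (exp (-1))).indicator 1 y) ∧
      J < gammaIntegral γ g := by
  have hcont : Tendsto (fun s : ℝ => s ^ γ / γ) (𝓝[<] 1) (𝓝 (1 / γ)) := by
    simpa using (((continuous_id.rpow_const fun _ => Or.inr hγ.le).div_const γ).tendsto 1).mono_left
      nhdsWithin_le_nhds
  obtain ⟨s, hsJ, hs0, hs1⟩ :=
    ((hcont.eventually_const_lt (by linarith : (J + 1 / γ) / 2 < 1 / γ)).and
      (Ioo_mem_nhdsLT zero_lt_one)).exists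
  set ε := (1 / γ - J) / (4 * Gamma γ)
  obtain ⟨q, hq0, hq⟩ := exists_polynomial_sandwich_indicator (exp_pos (-1))
    (exp_lt_exp.2 (neg_lt_neg hs1)) (ε := ε) (div_pos (sub_pos.2 hJ) (by positivity))
  have hmem := polynomial_eval_mem_admissible hγ hsum hasymp (q := q - C ε * X) (by simp [hq0])
  obtain ⟨hint, hval⟩ := gammaIntegral_indicator_add hγ hs0 (-(2 * ε))
  refine ⟨_, hmem, fun y hy => ?_, ?_⟩
  · simp only [eval_sub, eval_mul, eval_C, eval_X]
    linarith [(hq y hy).2]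
  refine lt_of_lt_of_le ?_ (gammaIntegral_mono hint hmem.2.1 fun y hy => ?_)
  · have : 2 * ε * Gamma γ = (1 / γ - J) / 2 := by unfold ε; field_simp; ring
    rw [hval]
    linarith
  · simp only [eval_sub, eval_mul, eval_C, eval_X]
    linarith [(hq y hy).1]

theorem natCard_setOf_le_eq_laplaceSum {x : ℝ} (hx : 0 < x) :
    (Nat.card {n : ℕ | lam n ≤ x} : ℝ) = laplaceSum lam ((Ici (exp (-1))).indicator 1) x⁻¹ := by
  have hiff : ∀ n, -1 ≤ -lam n * x⁻¹ ↔ lam n ≤ x := fun n => by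
    rw [neg_mul, neg_le_neg_iff, ← div_eq_mul_inv, div_le_one hx]
  have hterm : ∀ n, (Ici (exp (-1))).indicator (1 : ℝ → ℝ) (exp (-lam n * x⁻¹)) =
      {n | lam n ≤ x}.indicator 1 n := fun n => by
    simp only [indicator_apply, mem_Ici, exp_le_exp, hiff, mem_ofPred_eq, Pi.one_apply]
  rw [laplaceSum, tsum_congr hterm, ← tsum_subtype]
  simp only [Pi.one_apply, tsum_const, nsmul_eq_mul, mul_one]

end

end Karamata

open Karamata

theorem stmt18_general (lam : ℕ → ℝ) (hpos : ∀ n, 0 ≤ lam n)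
    (hsum : ∀ t > (0 : ℝ), Summable fun n => Real.exp (-lam n * t))
    (A γ : ℝ) (hA : 0 < A) (hγ : 0 < γ)
    (hasymp : Tendsto (fun t : ℝ => (∑' n, Real.exp (-lam n * t)) * t ^ γ)
      (nhdsWithin 0 (Set.Ioi 0)) (nhds A)) :
    Tendsto (fun x : ℝ => (Nat.card {n : ℕ | lam n ≤ x} : ℝ) / x ^ γ)
      atTop (nhds (A / Real.Gamma (γ + 1))) := by
  have hχ : ∀ t > 0, Summable fun n => (Ici (exp (-1))).indicator (1 : ℝ → ℝ) (exp (-lam n * t)) :=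
    fun t ht => ((hsum t ht).mul_left _).of_nonneg_of_le (fun n => indicator_nonneg (by simp) _)
      fun n => indicator_Ici_le_inv_mul (exp_pos _) (exp_pos _).le
  have hlim := tendsto_of_admissible_sandwich hA hγ hpos hχ
    (fun J hJ => exists_admissible_ge_indicator hγ hsum hasymp hJ)
    (fun J hJ => exists_admissible_le_indicator hγ hsum hasymp hJ)
  have hval : A / Gamma γ * (1 / γ) = A / Gamma (γ + 1) := by
    rw [Gamma_add_one hγ.ne']
    field_simp
  rw [hval] at hlim
  refine (hlim.comp tendsto_inv_atTop_nhdsGT_zero).congr' ?_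
  filter_upwards [eventually_gt_atTop 0] with x hx
  rw [Function.comp_apply, natCard_setOf_le_eq_laplaceSum hx, inv_rpow hx.le, div_eq_mul_inv]

/-- Karamata's Tauberian theorem for eigenvalue counting. If
`Σ_n e^{−λ_n t} ∼ A t^{−γ}` as `t → 0⁺`, then `N(λ) = #{n : λ_n ≤ λ}` satisfies
`N(λ) ∼ (A/Γ(γ+1)) λ^γ` as `λ → ∞`. -/
theorem stmt18 (lam : ℕ → ℝ) (hmono : Monotone lam) (hpos : ∀ n, 0 ≤ lam n)
    (hsum : ∀ t > (0 : ℝ), Summable fun n => Real.exp (-lam n * t))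
    (A γ : ℝ) (hA : 0 < A) (hγ : 0 < γ)
    (hasymp : Tendsto (fun t : ℝ => (∑' n, Real.exp (-lam n * t)) * t ^ γ)
      (nhdsWithin 0 (Set.Ioi 0)) (nhds A)) :
    Tendsto (fun x : ℝ => (Nat.card {n : ℕ | lam n ≤ x} : ℝ) / x ^ γ)
      atTop (nhds (A / Real.Gamma (γ + 1))) :=
  stmt18_general lam hpos hsum A γ hA hγ hasymp
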